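/- arXiv:1602.05020 — 3 statements merged into one kernel-verified Lean document; each statement's English description precedes it below -/
import Mathlib

section
/- With the coefficients 𝒟 = (1/|h'|)·{ (p/4)|h''/h'|² + ε[1 + (Z/2)(h''/h') + (conj(Z)/2)(conj(h'')/conj(h'))] }, ℰ = (|h|²/|h'|)·{ (p/4)|h''/h' − 2h'/h|² + ε[1 + (Z/2)(h''/h' − 2h'/h) + (conj(Z)/2)(conj(h'')/conj(h') − 2conj(h')/conj(h))] }, and ℱ = (h/|h'|)·{ (p/4)(h''/h' − 2h'/h)(conj(h'')/conj(h')) + ε[1 + (Z/2)(h''/h' − 2h'/h) + (conj(Z)/2)(conj(h'')/conj(h'))] }, one has ℱ·conj(ℱ) − 𝒟·ℰ = −ε. -/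
/-!
Up to the factors `1/|h'|`, `|h|²/|h'|` and `h/|h'|`, the coefficients `𝒟`, `ℰ`, `ℱ` are the values
`H(A,A)`, `H(B,B)`, `H(B,A)` of the Hermitian form `H(X,Y) = (X,1) M (conj Y,1)ᵀ` with
`M = !![p/4, εZ/2; ε conj Z/2, ε]`. So `ℱ conj ℱ − 𝒟 ℰ` is `|h|²/|h'|²` times minus the Gram
determinant of `(A,1), (B,1)`, which is `det M · |A − B|² = (ε/4) · 4|h'|²/|h|²`: the relation
`p = 1 + ε|Z|²` makes `det M = (εp − ε²|Z|²)/4` equal to `ε/4`.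
-/

open Complex

section AffineHermForm

variable {R : Type*} [CommRing R] [StarRing R]

/-- The form `(X, 1) M (star Y, 1)ᵀ` with `M = !![a, c; star c, d]`. -/
def affineHermForm (a c d X Y : R) : R :=
  a * X * star Y + c * X + star c * star Y + d

theorem star_affineHermForm {a d : R} (ha : IsSelfAdjoint a) (hd : IsSelfAdjoint d) (c X Y : R) :
    star (affineHermForm a c d X Y) = affineHermForm a c d Y X := by
  simp only [affineHermForm, star_add, star_mul, star_star, ha.star_eq, hd.star_eq]
  ring

theorem affineHermForm_mul_swap_sub_mul_diag (a c d X Y : R) :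
    affineHermForm a c d X Y * affineHermForm a c d Y X -
        affineHermForm a c d X X * affineHermForm a c d Y Y =
      -((a * d - c * star c) * ((X - Y) * star (X - Y))) := by
  simp only [affineHermForm, star_sub]
  ring

end AffineHermForm

theorem gram_det_eq_div_four_of_eq_one_add_mul_normSq {ε p : ℝ} {Z : ℂ} (hp : p = 1 + ε * normSq Z) :
    (p / 4 : ℂ) * ε - ε * Z / 2 * star (ε * Z / 2 : ℂ) = ε / 4 := by
  rw [hp]
  simp only [star_div₀, star_mul', Complex.star_def, conj_ofReal, map_ofNat]
  push_cast
  rw [← mul_conj]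
  ring

theorem identity_FFbar_DE_general (h : ℂ → ℂ) (Z : ℂ) (ε : ℝ)
    (hh : h Z ≠ 0) (hh' : deriv h Z ≠ 0)
    (p : ℝ) (hp : p = 1 + ε * Complex.normSq Z) :
    let m : ℂ := ‖deriv h Z‖
    let A : ℂ := iteratedDeriv 2 h Z / deriv h Z
    let B : ℂ := iteratedDeriv 2 h Z / deriv h Z - 2 * deriv h Z / h Z
    let 𝒟 : ℂ := (1 / m) * ((p / 4) * (A * star A) +
      ε * (1 + (Z / 2) * A + (star Z / 2) * star A))
    let ℰ : ℂ := (Complex.normSq (h Z) / m) * ((p / 4) * (B * star B) +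
      ε * (1 + (Z / 2) * B + (star Z / 2) * star B))
    let ℱ : ℂ := (h Z / m) * ((p / 4) * B * star A +
      ε * (1 + (Z / 2) * B + (star Z / 2) * star A))
    ℱ * star ℱ - 𝒟 * ℰ = -ε := by
  intro m A B 𝒟 ℰ ℱ
  set H := affineHermForm (p / 4 : ℂ) (ε * Z / 2) ε
  have hε : IsSelfAdjoint (ε : ℂ) := Complex.conj_ofReal ε
  have hp4 : IsSelfAdjoint (p / 4 : ℂ) := by simp [IsSelfAdjoint]
  have hD : 𝒟 = H A A / m := by
    simp only [𝒟, H, affineHermForm, star_div₀, star_mul', hε.star_eq, star_ofNat]; ring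
  have hE : ℰ = normSq (h Z) / m * H B B := by
    simp only [ℰ, H, affineHermForm, star_div₀, star_mul', hε.star_eq, star_ofNat]; ring
  have hF : ℱ = h Z / m * H B A := by
    simp only [ℱ, H, affineHermForm, star_div₀, star_mul', hε.star_eq, star_ofNat]; ring
  have hm : star m = m := Complex.conj_ofReal _
  have hFstar : star ℱ = star (h Z) / m * H A B := by
    rw [hF, star_mul', star_div₀, hm, star_affineHermForm hp4 hε]
  have hBA : B - A = -(2 * deriv h Z / h Z) := by simp only [A, B]; ring
  have hgram := affineHermForm_mul_swap_sub_mul_diag (p / 4 : ℂ) (ε * Z / 2) ε B A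
  rw [gram_det_eq_div_four_of_eq_one_add_mul_normSq hp, hBA] at hgram
  have hmm : m * m = deriv h Z * star (deriv h Z) := by
    rw [Complex.star_def, mul_conj, ← Complex.sq_norm]; push_cast; ring
  have hw : star (h Z) ≠ 0 := star_ne_zero.mpr hh
  have ha : star (deriv h Z) ≠ 0 := star_ne_zero.mpr hh'
  calc ℱ * star ℱ - 𝒟 * ℰ
      = h Z * star (h Z) / (m * m) * (H B A * H A B - H B B * H A A) := by
        rw [hFstar, hE, hD, hF, ← mul_conj, ← Complex.star_def]; ring
    _ = -ε := by
        rw [hgram, hmm, star_neg, star_div₀, star_mul', star_ofNat]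
        field_simp
        ring

/-- Second identity (2.6): `ℱ conj ℱ − 𝒟 ℰ = −ε` for the coefficients (2.5). -/
theorem identity_FFbar_DE (h : ℂ → ℂ) (Z : ℂ) (ε : ℝ)
    (hε : ε = -1 ∨ ε = 0 ∨ ε = 1)
    (hhol : AnalyticAt ℂ h Z) (hh : h Z ≠ 0) (hh' : deriv h Z ≠ 0)
    (p : ℝ) (hp : p = 1 + ε * Complex.normSq Z) (hppos : 0 < p) :
    let m : ℂ := ‖deriv h Z‖
    let A : ℂ := iteratedDeriv 2 h Z / deriv h Z
    let B : ℂ := iteratedDeriv 2 h Z / deriv h Z - 2 * deriv h Z / h Z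
    let 𝒟 : ℂ := (1 / m) * ((p / 4) * (A * star A) +
      ε * (1 + (Z / 2) * A + (star Z / 2) * star A))
    let ℰ : ℂ := (Complex.normSq (h Z) / m) * ((p / 4) * (B * star B) +
      ε * (1 + (Z / 2) * B + (star Z / 2) * star B))
    let ℱ : ℂ := (h Z / m) * ((p / 4) * B * star A +
      ε * (1 + (Z / 2) * B + (star Z / 2) * star A))
    ℱ * star ℱ - 𝒟 * ℰ = -ε :=
  identity_FFbar_DE_general h Z ε hh hh' p hp
end

section
/- With 𝒜 = 1/(p|h'|), ℬ = |h|²/(p|h'|), 𝒞 = h/(p|h'|), and 𝒟, ℰ, ℱ as in the transformation (2.5) for expanding impulsive waves, the identity 𝒜·ℰ + ℬ·𝒟 − 𝒞·conj(ℱ) − conj(𝒞)·ℱ = 1 holds. -/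
/-!
Up to scalar factors, `ℰ`, `𝒟`, `ℱ`, `conj ℱ` are the values of the single form
`(p/4) X conj Y + ε (1 + (Z/2) X + (conj Z/2) conj Y)` at `(B, B)`, `(A, A)`, `(B, A)`, `(A, B)`,
where `A = h''/h'` and `B = A − 2h'/h`. Weighted by `𝒜, ℬ, 𝒞, conj 𝒞` they combine into the
second difference of this form. Its `ε`-part is affine in `X` and in `conj Y` separately, so it
cancels, and `(p/4) |B − A|² = p |h'|² / |h|²` remains; the prefactor `|h|² / (p |h'|²)` turns
this into `1`.
-/

open Complex

namespace ImpulsiveWave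

noncomputable def bracket (p ε : ℝ) (Z X Y : ℂ) : ℂ :=
  p / 4 * X * star Y + ε * (1 + Z / 2 * X + star Z / 2 * star Y)

variable (p ε : ℝ) (Z : ℂ)

lemma star_bracket (X Y : ℂ) : star (bracket p ε Z X Y) = bracket p ε Z Y X := by
  simp only [bracket, star_add, star_mul', star_div₀, star_one, Complex.star_def, conj_conj,
    conj_ofReal, map_ofNat]
  ring

lemma bracket_self_add_bracket_self_sub_bracket_sub_bracket (X Y : ℂ) :
    bracket p ε Z X X + bracket p ε Z Y Y - bracket p ε Z Y X - bracket p ε Z X Y =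
      p / 4 * normSq (X - Y) := by
  rw [normSq_eq_conj_mul_self]
  simp only [bracket, map_sub, Complex.star_def]
  ring

lemma combination_eq_normSq_div_mul (f : ℂ) (r p : ℝ) (b₁ b₂ b₃ : ℂ) :
    1 / (p * r) * (normSq f / r * b₁) + normSq f / (p * r) * (1 / r * b₂)
        - f / (p * r) * star (f / r * b₃) - star (f / (p * r)) * (f / r * b₃) =
      normSq f / (p * r ^ 2) * (b₁ + b₂ - star b₃ - b₃) := by
  simp only [star_mul', star_div₀, Complex.star_def, conj_ofReal, ← mul_conj]
  ring

end ImpulsiveWave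

open ImpulsiveWave

theorem identity_AE_BD_CF_general (h : ℂ → ℂ) (Z : ℂ) (ε : ℝ)
    (hh : h Z ≠ 0) (hh' : deriv h Z ≠ 0)
    (p : ℝ) (hppos : 0 < p) :
    let m : ℂ := ‖deriv h Z‖
    let A : ℂ := iteratedDeriv 2 h Z / deriv h Z
    let B : ℂ := iteratedDeriv 2 h Z / deriv h Z - 2 * deriv h Z / h Z
    let 𝒜 : ℂ := 1 / (p * m)
    let ℬ : ℂ := Complex.normSq (h Z) / (p * m)
    let 𝒞 : ℂ := h Z / (p * m)
    let 𝒟 : ℂ := (1 / m) * ((p / 4) * (A * star A) +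
      ε * (1 + (Z / 2) * A + (star Z / 2) * star A))
    let ℰ : ℂ := (Complex.normSq (h Z) / m) * ((p / 4) * (B * star B) +
      ε * (1 + (Z / 2) * B + (star Z / 2) * star B))
    let ℱ : ℂ := (h Z / m) * ((p / 4) * B * star A +
      ε * (1 + (Z / 2) * B + (star Z / 2) * star A))
    𝒜 * ℰ + ℬ * 𝒟 - 𝒞 * star ℱ - star 𝒞 * ℱ = 1 := by
  intro m A B 𝒜 ℬ 𝒞 𝒟 ℰ ℱ
  have hD : 𝒟 = 1 / m * bracket p ε Z A A := by simp only [𝒟, bracket]; ring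
  have hE : ℰ = normSq (h Z) / m * bracket p ε Z B B := by simp only [ℰ, bracket]; ring
  have hF : ℱ = h Z / m * bracket p ε Z B A := by simp only [ℱ, bracket]
  have hBA : B - A = -(2 * deriv h Z / h Z) := by simp only [A, B]; ring
  calc 𝒜 * ℰ + ℬ * 𝒟 - 𝒞 * star ℱ - star 𝒞 * ℱ
      = normSq (h Z) / (p * ‖deriv h Z‖ ^ 2) * (p / 4 * normSq (B - A)) := by
        rw [hD, hE, hF, combination_eq_normSq_div_mul, star_bracket,
          bracket_self_add_bracket_self_sub_bracket_sub_bracket]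
    _ = 1 := by
        have hp : (p : ℂ) ≠ 0 := ofReal_ne_zero.mpr hppos.ne'
        have hf : (normSq (h Z) : ℂ) ≠ 0 := ofReal_ne_zero.mpr (normSq_eq_zero.not.mpr hh)
        have hd : (‖deriv h Z‖ : ℂ) ≠ 0 := ofReal_ne_zero.mpr (norm_ne_zero_iff.mpr hh')
        rw [hBA, normSq_neg, normSq_div, normSq_mul, normSq_ofNat, normSq_eq_norm_sq (deriv h Z)]
        push_cast
        field_simp
        norm_num

/-- Third identity (2.6): `𝒜ℰ + ℬ𝒟 − 𝒞 conj ℱ − conj 𝒞 ℱ = 1` for the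
coefficients (2.5). -/
theorem identity_AE_BD_CF (h : ℂ → ℂ) (Z : ℂ) (ε : ℝ)
    (hε : ε = -1 ∨ ε = 0 ∨ ε = 1)
    (hhol : AnalyticAt ℂ h Z) (hh : h Z ≠ 0) (hh' : deriv h Z ≠ 0)
    (p : ℝ) (hp : p = 1 + ε * Complex.normSq Z) (hppos : 0 < p) :
    let m : ℂ := ‖deriv h Z‖
    let A : ℂ := iteratedDeriv 2 h Z / deriv h Z
    let B : ℂ := iteratedDeriv 2 h Z / deriv h Z - 2 * deriv h Z / h Z
    let 𝒜 : ℂ := 1 / (p * m)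
    let ℬ : ℂ := Complex.normSq (h Z) / (p * m)
    let 𝒞 : ℂ := h Z / (p * m)
    let 𝒟 : ℂ := (1 / m) * ((p / 4) * (A * star A) +
      ε * (1 + (Z / 2) * A + (star Z / 2) * star A))
    let ℰ : ℂ := (Complex.normSq (h Z) / m) * ((p / 4) * (B * star B) +
      ε * (1 + (Z / 2) * B + (star Z / 2) * star B))
    let ℱ : ℂ := (h Z / m) * ((p / 4) * B * star A +
      ε * (1 + (Z / 2) * B + (star Z / 2) * star A))
    𝒜 * ℰ + ℬ * 𝒟 - 𝒞 * star ℱ - star 𝒞 * ℱ = 1 :=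
  identity_AE_BD_CF_general h Z ε hh hh' p hppos
end

section
/- The refraction formulas for velocities across the expanding impulse preserve the normalization: if (𝒰̇⁻, 𝒱̇⁻, η̇⁻) are obtained from (𝒰̇⁺, 𝒱̇⁺, η̇⁺) via the linear map with coefficients (4.3)–(4.5) built from h and its derivatives at Z_i, then η̇⁻·conj(η̇⁻) − 𝒰̇⁻·𝒱̇⁻ = η̇⁺·conj(η̇⁺) − 𝒰̇⁺·𝒱̇⁺. -/
/-!
Encode a velocity as the Hermitian matrix `X = !![𝒰̇, η̇; conj η̇, 𝒱̇]`, whose determinant is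
minus the normalization. The refraction formulas say exactly that `X⁻ = |h'|⁻¹ • M X⁺ Mᴴ` with
`M = !![q₁, -h q₂; A/2, -h B/2]`, and `det M = h (A - B) / 2 = h'`, so
`det X⁻ = |h'|⁻² |det M|² det X⁺ = det X⁺`.
-/

open Complex Matrix

theorem Matrix.det_mul_mul_conjTranspose {n R : Type*} [Fintype n] [DecidableEq n] [CommRing R]
    [StarRing R] (M X : Matrix n n R) : (M * X * Mᴴ).det = M.det * star M.det * X.det := by
  rw [det_mul, det_mul, det_conjTranspose]
  ring

theorem Matrix.conjTranspose_fin_two_of {R : Type*} [Star R] (a b c d : R) :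
    !![a, b; c, d]ᴴ = !![star a, star c; star b, star d] := by
  ext i j
  fin_cases i <;> fin_cases j <;> rfl

theorem Matrix.smul_fin_two_of {R α : Type*} [SMul R α] (r : R) (a b c d : α) :
    r • !![a, b; c, d] = !![r • a, r • b; r • c, r • d] := by
  ext i j
  fin_cases i <;> fin_cases j <;> rfl

/-- Here `A = h''/h'` and `B = h''/h' - 2h'/h` at `Zi`. -/
noncomputable def refractionMatrix (Zi H0 A B : ℂ) : Matrix (Fin 2) (Fin 2) ℂ :=
  !![1 + Zi / 2 * A, -(H0 * (1 + Zi / 2 * B)); A / 2, -(H0 * B / 2)]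

theorem det_refractionMatrix (Zi H0 A B : ℂ) :
    (refractionMatrix Zi H0 A B).det = H0 * (A - B) / 2 := by
  rw [refractionMatrix, det_fin_two_of]
  ring

theorem refraction_preserves_normalization_general (h : ℂ → ℂ) (Zi : ℂ)
    (hh : h Zi ≠ 0) (hh' : deriv h Zi ≠ 0)
    (Udot Vdot : ℝ) (ηdot : ℂ) :
    let H0 : ℂ := h Zi
    let H1 : ℂ := deriv h Zi
    let H2 : ℂ := iteratedDeriv 2 h Zi
    let m : ℂ := ((‖H1‖ : ℝ) : ℂ)
    let A : ℂ := H2 / H1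
    let B : ℂ := H2 / H1 - 2 * H1 / H0
    let q1 : ℂ := 1 + Zi / 2 * A
    let q2 : ℂ := 1 + Zi / 2 * B
    let aU : ℂ := (1 / m) * (q1 * star q1)
    let bU : ℂ := (H0 * star H0 / m) * (q2 * star q2)
    let cU : ℂ := -(H0 / m) * q2 * star q1
    let aV : ℂ := (1 / (4 * m)) * (A * star A)
    let bV : ℂ := (H0 * star H0 / (4 * m)) * (B * star B)
    let cV : ℂ := -(H0 / (4 * m)) * B * star A
    let aη : ℂ := (1 / (2 * m)) * q1 * star A
    let bη : ℂ := (H0 * star H0 / (2 * m)) * q2 * star B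
    let cbarη : ℂ := -(star H0 / (2 * m)) * q1 * star B
    let cη : ℂ := -(H0 / (2 * m)) * q2 * star A
    let Udot' : ℂ := aU * (Udot : ℂ) + bU * (Vdot : ℂ) + star cU * ηdot + cU * star ηdot
    let Vdot' : ℂ := aV * (Udot : ℂ) + bV * (Vdot : ℂ) + star cV * ηdot + cV * star ηdot
    let ηdot' : ℂ := aη * (Udot : ℂ) + bη * (Vdot : ℂ) + cbarη * ηdot + cη * star ηdot
    ηdot' * star ηdot' - Udot' * Vdot' =
      ηdot * star ηdot - (Udot : ℂ) * (Vdot : ℂ) := by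
  intro H0 H1 H2 m A B q1 q2 aU bU cU aV bV cV aη bη cbarη cη Udot' Vdot' ηdot'
  have hm_star : star m = m := conj_ofReal _
  have hm_normSq : m⁻¹ ^ 2 * (H1 * star H1) = 1 := by
    have hm : (‖H1‖ : ℂ) ≠ 0 := by simpa using hh'
    simp only [m]
    rw [star_def, mul_conj, normSq_eq_norm_sq]
    push_cast
    field_simp
  have hdet_refraction : H0 * (A - B) / 2 = H1 :=
    calc H0 * (A - B) / 2 = H0 * (H1 / H0) := by simp only [A, B]; ring
      _ = H1 := mul_div_cancel₀ H1 hh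
  have hcongr : m⁻¹ • (refractionMatrix Zi H0 A B * !![(Udot : ℂ), ηdot; star ηdot, (Vdot : ℂ)] *
      (refractionMatrix Zi H0 A B)ᴴ) = !![Udot', ηdot'; star ηdot', Vdot'] := by
    rw [refractionMatrix, conjTranspose_fin_two_of, mul_fin_two, mul_fin_two, smul_fin_two_of]
    congr 5 <;>
    · simp only [Udot', Vdot', ηdot', aU, bU, cU, aV, bV, cV, aη, bη, cbarη, cη, q1, q2,
        star_add, star_mul', star_neg, star_div₀, star_one, star_ofNat, hm_star, star_def,
        conj_conj, conj_ofReal]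
      ring
  have hdet := congrArg det hcongr
  rw [det_smul, det_mul_mul_conjTranspose, det_refractionMatrix, hdet_refraction, det_fin_two_of,
    det_fin_two_of, Fintype.card_fin] at hdet
  linear_combination hdet + (ηdot * star ηdot - Udot * Vdot) * hm_normSq

/-- The refraction formulas (4.2)–(4.5) for velocities across the expanding
impulse preserve the normalization:
`η̇⁻ conj η̇⁻ − 𝒰̇⁻ 𝒱̇⁻ = η̇⁺ conj η̇⁺ − 𝒰̇⁺ 𝒱̇⁺`. -/
theorem refraction_preserves_normalization (h : ℂ → ℂ) (Zi : ℂ)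
    (hhol : AnalyticAt ℂ h Zi) (hh : h Zi ≠ 0) (hh' : deriv h Zi ≠ 0)
    (Udot Vdot : ℝ) (ηdot : ℂ) :
    let H0 : ℂ := h Zi
    let H1 : ℂ := deriv h Zi
    let H2 : ℂ := iteratedDeriv 2 h Zi
    let m : ℂ := ((‖H1‖ : ℝ) : ℂ)
    let A : ℂ := H2 / H1
    let B : ℂ := H2 / H1 - 2 * H1 / H0
    let q1 : ℂ := 1 + Zi / 2 * A
    let q2 : ℂ := 1 + Zi / 2 * B
    let aU : ℂ := (1 / m) * (q1 * star q1)
    let bU : ℂ := (H0 * star H0 / m) * (q2 * star q2)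
    let cU : ℂ := -(H0 / m) * q2 * star q1
    let aV : ℂ := (1 / (4 * m)) * (A * star A)
    let bV : ℂ := (H0 * star H0 / (4 * m)) * (B * star B)
    let cV : ℂ := -(H0 / (4 * m)) * B * star A
    let aη : ℂ := (1 / (2 * m)) * q1 * star A
    let bη : ℂ := (H0 * star H0 / (2 * m)) * q2 * star B
    let cbarη : ℂ := -(star H0 / (2 * m)) * q1 * star B
    let cη : ℂ := -(H0 / (2 * m)) * q2 * star A
    let Udot' : ℂ := aU * (Udot : ℂ) + bU * (Vdot : ℂ) + star cU * ηdot + cU * star ηdot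
    let Vdot' : ℂ := aV * (Udot : ℂ) + bV * (Vdot : ℂ) + star cV * ηdot + cV * star ηdot
    let ηdot' : ℂ := aη * (Udot : ℂ) + bη * (Vdot : ℂ) + cbarη * ηdot + cη * star ηdot
    ηdot' * star ηdot' - Udot' * Vdot' =
      ηdot * star ηdot - (Udot : ℂ) * (Vdot : ℂ) :=
  refraction_preserves_normalization_general h Zi hh hh' Udot Vdot ηdot
end
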